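/- Let I₁, I₂ be Holevo instruments H^{(A,α)} ∈ In(H₁,H₂) and H^{(B,β)} ∈ In(H₂,H₃). Their sequential product I_{x₁x₂}(ρ) = H^{(B,β)}_{x₂}(H^{(A,α)}_{x₁}(ρ)) equals the Holevo bi-instrument H^{(C,β)}_{x₁x₂}(ρ) = tr(ρ C_{x₁x₂}) β_{x₂}, where C_{x₁x₂} = tr(α_{x₁} B_{x₂}) A_{x₁} is a bi-observable; consequently the sequential product of two Holevo instruments is Holevo and measures C. -/

import Mathlib

open Matrix BigOperators Finset ComplexOrder

noncomputable section

/-- An effect on a finite-dimensional Hilbert space (modeled as a matrix):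
`0 ≤ A ≤ I`. -/
def IsEffect {d : Type} [Fintype d] [DecidableEq d] (A : Matrix d d ℂ) : Prop :=
  A.PosSemidef ∧ (1 - A).PosSemidef

/-- An observable: a finite family of effects summing to the identity. -/
def IsObservable {Ω d : Type} [Fintype Ω] [Fintype d] [DecidableEq d]
    (A : Ω → Matrix d d ℂ) : Prop :=
  (∀ x, IsEffect (A x)) ∧ ∑ x, A x = 1

/-- A state: a positive operator of trace one. -/
def IsState {d : Type} [Fintype d] [DecidableEq d] (ρ : Matrix d d ℂ) : Prop :=
  ρ.PosSemidef ∧ ρ.trace = 1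


/-! The Holevo instrument `H^{(B,β)}` only reads its input through the numbers `tr(ρ B_y)`, so
composing it after `H^{(A,α)}` feeds it `tr(ρ A_x) α_x` and returns `tr(ρ A_x) tr(α_x B_y) β_y`.
Since `α_x` is a state and `B` an observable, `y ↦ tr(α_x B_y)` is a probability distribution
for each `x`, and weighting the effects `A_x` by such a Markov kernel again gives an observable. -/

open scoped MatrixOrder in
theorem Matrix.PosSemidef.trace_mul_nonneg {n 𝕜 : Type*} [Fintype n] [DecidableEq n] [RCLike 𝕜]
    {P Q : Matrix n n 𝕜} (hP : P.PosSemidef) (hQ : Q.PosSemidef) : 0 ≤ (P * Q).trace := by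
  obtain ⟨S, rfl⟩ := CStarAlgebra.nonneg_iff_eq_star_mul_self.mp hP.nonneg
  rw [star_eq_conjTranspose, Matrix.mul_assoc, trace_mul_comm]
  exact (hQ.mul_mul_conjTranspose_same S).trace_nonneg

theorem Matrix.trace_trace_smul_mul {R n m : Type*} [CommSemiring R] [Fintype n] [Fintype m]
    (ρ A : Matrix n n R) (α B : Matrix m m R) :
    ((ρ * A).trace • α * B).trace = (ρ * ((α * B).trace • A)).trace := by
  simp only [Matrix.smul_mul, Matrix.mul_smul, trace_smul, smul_eq_mul, mul_comm]

section Observables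

variable {d : Type} [Fintype d] [DecidableEq d]

theorem IsEffect.smul {E : Matrix d d ℂ} (hE : IsEffect E) {c : ℂ} (hc₀ : 0 ≤ c) (hc₁ : c ≤ 1) :
    IsEffect (c • E) := by
  have hsplit : 1 - c • E = (1 - c) • (1 : Matrix d d ℂ) + c • (1 - E) := by
    rw [sub_smul, one_smul, smul_sub]
    abel
  refine ⟨hE.1.smul hc₀, ?_⟩
  rw [hsplit]
  exact (PosSemidef.one.smul (sub_nonneg.mpr hc₁)).add (hE.2.smul hc₀)

theorem IsState.sum_trace_mul_eq_one {Ω : Type} [Fintype Ω] {ρ : Matrix d d ℂ} (hρ : IsState ρ)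
    {B : Ω → Matrix d d ℂ} (hB : IsObservable B) : ∑ y, (ρ * B y).trace = 1 := by
  rw [← trace_sum, ← Finset.mul_sum, hB.2, Matrix.mul_one, hρ.2]

theorem IsObservable.smul_of_markov {Ω Ω' : Type} [Fintype Ω] [Fintype Ω']
    {A : Ω → Matrix d d ℂ} (hA : IsObservable A) {p : Ω → Ω' → ℂ}
    (hp₀ : ∀ x y, 0 ≤ p x y) (hp₁ : ∀ x, ∑ y, p x y = 1) :
    IsObservable (fun q : Ω × Ω' => p q.1 q.2 • A q.1) := by
  refine ⟨fun ⟨x, y⟩ => (hA.1 x).smul (hp₀ x y) ?_, ?_⟩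
  · calc p x y ≤ ∑ y', p x y' := single_le_sum (fun y' _ => hp₀ x y') (mem_univ y)
      _ = 1 := hp₁ x
  · simp only [Fintype.sum_prod_type, ← Finset.sum_smul, hp₁, one_smul]
    exact hA.2

end Observables

theorem holevo_sequential_product_general {Ω₁ Ω₂ d₁ d₂ d₃ : Type}
    [Fintype Ω₁] [Fintype Ω₂]
    [Fintype d₁] [DecidableEq d₁] [Fintype d₂] [DecidableEq d₂]
    (A : Ω₁ → Matrix d₁ d₁ ℂ) (hA : IsObservable A)
    (B : Ω₂ → Matrix d₂ d₂ ℂ) (hB : IsObservable B)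
    (α : Ω₁ → Matrix d₂ d₂ ℂ) (hα : ∀ x, IsState (α x))
    (β : Ω₂ → Matrix d₃ d₃ ℂ) :
    IsObservable (fun p : Ω₁ × Ω₂ => ((α p.1 * B p.2).trace) • A p.1) ∧
    ∀ (ρ : Matrix d₁ d₁ ℂ) (x₁ : Ω₁) (x₂ : Ω₂),
      ((((ρ * A x₁).trace • α x₁) * B x₂).trace • β x₂) =
        ((ρ * (((α x₁ * B x₂).trace) • A x₁)).trace • β x₂) :=
  ⟨hA.smul_of_markov (fun x y => (hα x).1.trace_mul_nonneg (hB.1 y).1)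
      (fun x => (hα x).sum_trace_mul_eq_one hB),
    fun ρ x₁ x₂ => by rw [trace_trace_smul_mul]⟩

/-- the sequential product of the Holevo instruments
`H^{(A,α)} ∈ In(H₁,H₂)` and `H^{(B,β)} ∈ In(H₂,H₃)` equals the Holevo
bi-instrument `H^{(C,β)}` with `C_{x₁x₂} = tr(α_{x₁} B_{x₂}) A_{x₁}`:
`C` is a bi-observable and
`H^{(B,β)}_{x₂}(H^{(A,α)}_{x₁}(ρ)) = tr(ρ C_{x₁x₂}) β_{x₂}` for all `ρ`;
consequently the sequential product is Holevo and measures `C`. -/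
theorem holevo_sequential_product {Ω₁ Ω₂ d₁ d₂ d₃ : Type}
    [Fintype Ω₁] [Fintype Ω₂]
    [Fintype d₁] [DecidableEq d₁] [Fintype d₂] [DecidableEq d₂]
    [Fintype d₃] [DecidableEq d₃]
    (A : Ω₁ → Matrix d₁ d₁ ℂ) (hA : IsObservable A)
    (B : Ω₂ → Matrix d₂ d₂ ℂ) (hB : IsObservable B)
    (α : Ω₁ → Matrix d₂ d₂ ℂ) (hα : ∀ x, IsState (α x))
    (β : Ω₂ → Matrix d₃ d₃ ℂ) (hβ : ∀ y, IsState (β y)) :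
    IsObservable (fun p : Ω₁ × Ω₂ => ((α p.1 * B p.2).trace) • A p.1) ∧
    ∀ (ρ : Matrix d₁ d₁ ℂ) (x₁ : Ω₁) (x₂ : Ω₂),
      ((((ρ * A x₁).trace • α x₁) * B x₂).trace • β x₂) =
        ((ρ * (((α x₁ * B x₂).trace) • A x₁)).trace • β x₂) :=
  holevo_sequential_product_general A hA B hB α hα β
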